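/- arXiv:2312.10116 — 7 statements merged into one kernel-verified Lean document; each statement's English description precedes it below -/
import Mathlib

section
/- If G satisfies the strict subgradient inequality G q > G p + ∑ y, g p y * (q y - p y) for all distinct probability vectors p ≠ q on Y, then the associated tangent-line scoring rule is strictly proper: for all probability vectors p ≠ q, ∑ y, q y * S q y > ∑ y, q y * S p y. -/
/-- A probability vector on a finite type `Y`. -/
def IsProbVec {Y : Type*} [Fintype Y] (q : Y → ℝ) : Prop :=
  (∀ y, 0 ≤ q y) ∧ ∑ y, q y = 1

/-- The tangent-line scoring rule associated with `G` and subgradient map `g`. -/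
def score {Y : Type*} [Fintype Y] (G : (Y → ℝ) → ℝ) (g : (Y → ℝ) → (Y → ℝ))
    (p : Y → ℝ) (y : Y) : ℝ :=
  G p + g p y - ∑ y', g p y' * p y'

/-- If `G` satisfies the strict subgradient inequality, then the associated
tangent-line scoring rule is strictly proper. -/
theorem tangent_scoring_rule_strictly_proper {Y : Type*} [Fintype Y] [Nonempty Y]
    (G : (Y → ℝ) → ℝ) (g : (Y → ℝ) → (Y → ℝ))
    (hsub : ∀ p q : Y → ℝ, IsProbVec p → IsProbVec q → p ≠ q →
      G q > G p + ∑ y, g p y * (q y - p y)) :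
    ∀ p q : Y → ℝ, IsProbVec p → IsProbVec q → p ≠ q →
      ∑ y, q y * score G g q y > ∑ y, q y * score G g p y := by
  intro p q hp hq hne
  have key : ∀ r : Y → ℝ, ∑ y, q y * score G g r y
      = G r + ∑ y, g r y * q y - ∑ y', g r y' * r y' := by
    intro r
    have h1 : ∑ y, q y * score G g r y
        = (∑ y, q y) * (G r - ∑ y', g r y' * r y') + ∑ y, g r y * q y := by
      rw [Finset.sum_mul, ← Finset.sum_add_distrib]
      exact Finset.sum_congr rfl fun y _ => by simp [score]; ring
    rw [h1, hq.2]; ring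
  rw [key p, key q]
  have h := hsub p q hp hq hne
  have : ∑ y, g p y * (q y - p y) = ∑ y, g p y * q y - ∑ y, g p y * p y := by
    rw [← Finset.sum_sub_distrib]; exact Finset.sum_congr rfl fun y _ => by ring
  simp
  linarith
end

section
/- Non-negativity of the acquisition function ΔQ_S (Lemma on properties of scoring): if G satisfies the subgradient inequality G q ≥ G p + ∑ y, g p y * (q y - p y) for all probability vectors p, q on Y, and m y > 0 for every y, then ∑ y, m y * G (n_y) ≥ G n, where n_y is the posterior predictive after observing y and n is the prior predictive. -/
/-- Non-negativity of the acquisition function `ΔQ_S`: under the subgradient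
inequality, `∑ y, m y * G (n_y) ≥ G n`. -/
theorem deltaQS_nonneg {Y Θ : Type*} [Fintype Y] [Nonempty Y]
    [Fintype Θ] [Nonempty Θ]
    (G : (Y → ℝ) → ℝ) (g : (Y → ℝ) → (Y → ℝ))
    (hsub : ∀ p q : Y → ℝ, IsProbVec p → IsProbVec q →
      G q ≥ G p + ∑ y, g p y * (q y - p y))
    (w : Θ → ℝ) (hw : IsProbVec w)
    (p : Θ → Y → ℝ) (hp : ∀ θ, IsProbVec (p θ))
    (r : Θ → Y → ℝ) (hr : ∀ θ, IsProbVec (r θ))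
    (m : Y → ℝ) (hm : ∀ y, m y = ∑ θ, w θ * p θ y)
    (hmpos : ∀ y, m y > 0)
    (n : Y → ℝ) (hn : ∀ y', n y' = ∑ θ, w θ * r θ y')
    (npost : Y → Y → ℝ)
    (hnpost : ∀ y y', npost y y' = ∑ θ, (w θ * p θ y / m y) * r θ y') :
    ∑ y, m y * G (npost y) ≥ G n := by
  -- ∑ y, m y = 1
  have hmsum : ∑ y, m y = 1 := by
    simp only [hm]
    rw [Finset.sum_comm]
    calc ∑ θ, ∑ y, w θ * p θ y = ∑ θ, w θ * ∑ y, p θ y := by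
          simp [Finset.mul_sum]
      _ = 1 := by simp [(fun θ => (hp θ).2), hw.2]
  -- n is a probability vector
  have hnprob : IsProbVec n := by
    constructor
    · intro y'
      rw [hn]
      exact Finset.sum_nonneg fun θ _ => mul_nonneg (hw.1 θ) ((hr θ).1 y')
    · simp only [hn]
      rw [Finset.sum_comm]
      calc ∑ θ, ∑ y', w θ * r θ y' = ∑ θ, w θ * ∑ y', r θ y' := by
            simp [Finset.mul_sum]
        _ = 1 := by simp [(fun θ => (hr θ).2), hw.2]
  -- each npost y is a probability vector
  have hnpprob : ∀ y, IsProbVec (npost y) := by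
    intro y
    constructor
    · intro y'
      rw [hnpost]
      exact Finset.sum_nonneg fun θ _ => mul_nonneg
        (div_nonneg (mul_nonneg (hw.1 θ) ((hp θ).1 y)) (hmpos y).le) ((hr θ).1 y')
    · simp only [hnpost]
      rw [Finset.sum_comm]
      have : ∑ θ, ∑ y', w θ * p θ y / m y * r θ y'
          = (∑ θ, w θ * p θ y) / m y := by
        rw [Finset.sum_div]
        refine Finset.sum_congr rfl fun θ _ => ?_
        rw [← Finset.mul_sum, (hr θ).2, mul_one]
      rw [this, ← hm y, div_self (hmpos y).ne']
  -- mixture identity: ∑ y, m y * npost y y' = n y'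
  have hmix : ∀ y', ∑ y, m y * npost y y' = n y' := by
    intro y'
    simp only [hnpost, Finset.mul_sum]
    rw [Finset.sum_comm]
    rw [hn]
    refine Finset.sum_congr rfl fun θ _ => ?_
    have : ∀ y, m y * (w θ * p θ y / m y * r θ y') = w θ * r θ y' * p θ y := by
      intro y
      field_simp [(hmpos y).ne']
    simp only [this, ← Finset.mul_sum, (hp θ).2, mul_one]
  -- apply subgradient inequality
  have key : ∀ y, m y * G (npost y) ≥
      m y * (G n + ∑ y', g n y' * (npost y y' - n y')) := fun y =>
    mul_le_mul_of_nonneg_left (hsub n (npost y) hnprob (hnpprob y)) (hmpos y).le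
  calc ∑ y, m y * G (npost y)
      ≥ ∑ y, m y * (G n + ∑ y', g n y' * (npost y y' - n y')) :=
        Finset.sum_le_sum fun y _ => key y
    _ = G n := by
        simp only [mul_add, Finset.sum_add_distrib, ← Finset.sum_mul, hmsum, one_mul]
        have hzero : ∑ y, m y * ∑ y', g n y' * (npost y y' - n y') = 0 := by
          simp only [Finset.mul_sum]
          rw [Finset.sum_comm]
          have : ∀ y', ∑ y, m y * (g n y' * (npost y y' - n y'))
              = g n y' * ((∑ y, m y * npost y y') - (∑ y, m y) * n y') := by
            intro y'
            rw [eq_comm, mul_sub, Finset.mul_sum, Finset.sum_mul, Finset.mul_sum,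
              ← Finset.sum_sub_distrib]
            refine Finset.sum_congr rfl fun y _ => by ring
          simp only [this, hmix, hmsum, one_mul, sub_self, mul_zero,
            Finset.sum_const_zero]
        rw [hzero, add_zero]
end

section
/- Score-form rewriting of ΔQ_S (rearrangement used in the proof of the Lemma on properties of scoring): assume m y > 0 for every y. Then ∑ y, m y * G (n_y) - G n = ∑ y, m y * (∑ y', n_y y' * (S (n_y) y' - S n y')), where S is the tangent-line scoring rule of G and g, n_y is the posterior predictive after observing y, and n is the prior predictive. -/
lemma score_self {Y : Type*} [Fintype Y] (G : (Y → ℝ) → ℝ) (g : (Y → ℝ) → (Y → ℝ))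
    (q : Y → ℝ) (hq : ∑ y, q y = 1) :
    ∑ y, q y * score G g q y = G q := by
  simp only [score, mul_sub, mul_add, Finset.sum_sub_distrib, Finset.sum_add_distrib,
    ← Finset.sum_mul, hq, one_mul]
  have : ∑ y, q y * g q y = ∑ y, g q y * q y := by
    simp [mul_comm]
  rw [this]
  ring

lemma score_other {Y : Type*} [Fintype Y] (G : (Y → ℝ) → ℝ) (g : (Y → ℝ) → (Y → ℝ))
    (q n : Y → ℝ) (hq : ∑ y, q y = 1) :
    ∑ y, q y * score G g n y = G n + (∑ y, q y * g n y) - ∑ y, g n y * n y := by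
  simp only [score, mul_sub, mul_add, Finset.sum_sub_distrib, Finset.sum_add_distrib,
    ← Finset.sum_mul, hq, one_mul]

/-- Score-form rewriting of `ΔQ_S`. -/
theorem deltaQS_score_form {Y Θ : Type*} [Fintype Y] [Nonempty Y]
    [Fintype Θ] [Nonempty Θ]
    (G : (Y → ℝ) → ℝ) (g : (Y → ℝ) → (Y → ℝ))
    (w : Θ → ℝ) (hw : IsProbVec w)
    (p : Θ → Y → ℝ) (hp : ∀ θ, IsProbVec (p θ))
    (r : Θ → Y → ℝ) (hr : ∀ θ, IsProbVec (r θ))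
    (m : Y → ℝ) (hm : ∀ y, m y = ∑ θ, w θ * p θ y)
    (hmpos : ∀ y, m y > 0)
    (n : Y → ℝ) (hn : ∀ y', n y' = ∑ θ, w θ * r θ y')
    (npost : Y → Y → ℝ)
    (hnpost : ∀ y y', npost y y' = ∑ θ, (w θ * p θ y / m y) * r θ y') :
    (∑ y, m y * G (npost y)) - G n =
      ∑ y, m y * (∑ y', npost y y' * (score G g (npost y) y' - score G g n y')) := by
  have hsum_m : ∑ y, m y = 1 := by
    simp only [hm]
    rw [Finset.sum_comm]
    simp only [← Finset.mul_sum, (fun θ => (hp θ).2)]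
    simpa using hw.2
  have hpost_sum : ∀ y, ∑ y', npost y y' = 1 := by
    intro y
    simp only [hnpost]
    rw [Finset.sum_comm]
    simp only [← Finset.mul_sum, (fun θ => (hr θ).2), mul_one]
    rw [← Finset.sum_div, ← hm y]
    exact div_self (hmpos y).ne'
  have hmix : ∀ y', ∑ y, m y * npost y y' = n y' := by
    intro y'
    simp only [hnpost, Finset.mul_sum]
    rw [Finset.sum_comm]
    have : ∀ θ, ∑ y, m y * (w θ * p θ y / m y * r θ y') = w θ * r θ y' := by
      intro θ
      have : ∀ y, m y * (w θ * p θ y / m y * r θ y') = w θ * r θ y' * p θ y := by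
        intro y
        field_simp [(hmpos y).ne']
      simp only [this, ← Finset.mul_sum, (hp θ).2, mul_one]
    simp only [this, ← hn]
  have key : ∀ y, ∑ y', npost y y' * (score G g (npost y) y' - score G g n y')
      = G (npost y) - (G n + (∑ y', npost y y' * g n y') - ∑ y', g n y' * n y') := by
    intro y
    simp only [mul_sub, Finset.sum_sub_distrib]
    rw [score_self G g (npost y) (hpost_sum y), score_other G g (npost y) n (hpost_sum y)]
  have key2 : ∑ y, m y * (∑ y', npost y y' * (score G g (npost y) y' - score G g n y'))
      = ∑ y, m y * (G (npost y) - (G n + (∑ y', npost y y' * g n y') - ∑ y', g n y' * n y')) :=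
    Finset.sum_congr rfl fun y _ => by rw [key y]
  rw [key2]
  simp only [mul_sub, Finset.sum_sub_distrib, mul_add, Finset.sum_add_distrib,
    ← Finset.sum_mul, hsum_m, one_mul]
  have : ∑ y, m y * ∑ y', npost y y' * g n y' = ∑ y', g n y' * n y' := by
    simp only [Finset.mul_sum]
    rw [Finset.sum_comm]
    congr 1; ext y'
    have : ∀ y, m y * (npost y y' * g n y') = g n y' * (m y * npost y y') := by
      intro y; ring
    simp only [this, ← Finset.mul_sum, hmix]
  rw [this]
  ring
end

section
/- Vanishing acquisition value forces predictive agreement (key step of the convergence theorem): if G satisfies the strict subgradient inequality G q > G p + ∑ y, g p y * (q y - p y) for all distinct probability vectors p ≠ q on Y, m y > 0 for every y, and ∑ y, m y * G (n_y) = G n, then the posterior predictive equals the prior predictive: n_y = n for every y. -/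
/-- Vanishing acquisition value forces predictive agreement: under the strict
subgradient inequality, `∑ y, m y * G (n_y) = G n` implies `n_y = n` for all `y`. -/
theorem deltaQS_eq_zero_implies_agreement {Y Θ : Type*} [Fintype Y] [Nonempty Y]
    [Fintype Θ] [Nonempty Θ]
    (G : (Y → ℝ) → ℝ) (g : (Y → ℝ) → (Y → ℝ))
    (hsub : ∀ p q : Y → ℝ, IsProbVec p → IsProbVec q → p ≠ q →
      G q > G p + ∑ y, g p y * (q y - p y))
    (w : Θ → ℝ) (hw : IsProbVec w)
    (p : Θ → Y → ℝ) (hp : ∀ θ, IsProbVec (p θ))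
    (r : Θ → Y → ℝ) (hr : ∀ θ, IsProbVec (r θ))
    (m : Y → ℝ) (hm : ∀ y, m y = ∑ θ, w θ * p θ y)
    (hmpos : ∀ y, m y > 0)
    (n : Y → ℝ) (hn : ∀ y', n y' = ∑ θ, w θ * r θ y')
    (npost : Y → Y → ℝ)
    (hnpost : ∀ y y', npost y y' = ∑ θ, (w θ * p θ y / m y) * r θ y')
    (heq : ∑ y, m y * G (npost y) = G n) :
    ∀ y, npost y = n := by
  have hwnn := hw.1
  have hwsum := hw.2
  -- n is a probability vector
  have hnP : IsProbVec n := by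
    constructor
    · intro y'
      rw [hn]
      exact Finset.sum_nonneg fun θ _ => mul_nonneg (hwnn θ) ((hr θ).1 y')
    · simp_rw [hn]
      rw [Finset.sum_comm]
      calc ∑ θ, ∑ y', w θ * r θ y' = ∑ θ, w θ * ∑ y', r θ y' := by
            simp_rw [Finset.mul_sum]
        _ = 1 := by simp_rw [(hr _).2]; simpa using hwsum
  -- each npost y is a probability vector
  have hnpostP : ∀ y, IsProbVec (npost y) := by
    intro y
    constructor
    · intro y'
      rw [hnpost]
      exact Finset.sum_nonneg fun θ _ => mul_nonneg
        (div_nonneg (mul_nonneg (hwnn θ) ((hp θ).1 y)) (hmpos y).le) ((hr θ).1 y')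
    · simp_rw [hnpost]
      rw [Finset.sum_comm]
      have : ∀ θ, ∑ y', w θ * p θ y / m y * r θ y' = w θ * p θ y / m y := by
        intro θ
        rw [← Finset.mul_sum, (hr θ).2, mul_one]
      simp_rw [this]
      rw [← Finset.sum_div, ← hm y, div_self (hmpos y).ne']
  -- ∑ y, m y = 1
  have hmsum : ∑ y, m y = 1 := by
    simp_rw [hm]
    rw [Finset.sum_comm]
    calc ∑ θ, ∑ y, w θ * p θ y = ∑ θ, w θ * ∑ y, p θ y := by simp_rw [Finset.mul_sum]
      _ = 1 := by simp_rw [(hp _).2]; simpa using hwsum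
  -- mixture property: ∑ y, m y * npost y y' = n y'
  have hmix : ∀ y', ∑ y, m y * npost y y' = n y' := by
    intro y'
    have hterm : ∀ y, m y * npost y y' = ∑ θ, w θ * p θ y * r θ y' := by
      intro y
      rw [hnpost, Finset.mul_sum]
      congr 1; ext θ
      rw [div_mul_eq_mul_div, mul_div_assoc', mul_div_cancel_left₀ _ (hmpos y).ne']
    simp_rw [hterm]
    rw [Finset.sum_comm, hn]
    congr 1; ext θ
    calc ∑ y, w θ * p θ y * r θ y' = w θ * r θ y' * ∑ y, p θ y := by
          rw [Finset.mul_sum]; congr 1; ext y; ring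
      _ = w θ * r θ y' := by rw [(hp θ).2, mul_one]
  -- main argument by contradiction
  by_contra hcon
  push_neg at hcon
  obtain ⟨y0, hy0⟩ := hcon
  have hle : ∀ y ∈ Finset.univ,
      m y * (G n + ∑ y', g n y' * (npost y y' - n y')) ≤ m y * G (npost y) := by
    intro y _
    by_cases h : npost y = n
    · rw [h]; simp
    · exact le_of_lt (by
        have := hsub n (npost y) hnP (hnpostP y) (fun he => h he.symm)
        exact mul_lt_mul_of_pos_left this (hmpos y))
  have hlt : ∑ y, m y * (G n + ∑ y', g n y' * (npost y y' - n y'))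
      < ∑ y, m y * G (npost y) := by
    refine Finset.sum_lt_sum hle ⟨y0, Finset.mem_univ y0, ?_⟩
    have := hsub n (npost y0) hnP (hnpostP y0) (fun he => hy0 he.symm)
    exact mul_lt_mul_of_pos_left this (hmpos y0)
  have hsumeq : ∑ y, m y * (G n + ∑ y', g n y' * (npost y y' - n y')) = G n := by
    have h1 : ∑ y, m y * (G n + ∑ y', g n y' * (npost y y' - n y'))
        = (∑ y, m y) * G n + ∑ y, ∑ y', m y * (g n y' * (npost y y' - n y')) := by
      rw [Finset.sum_mul]
      rw [← Finset.sum_add_distrib]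
      congr 1; ext y
      rw [mul_add, Finset.mul_sum]
    rw [h1, hmsum, one_mul, Finset.sum_comm]
    have h2 : ∀ y', ∑ y, m y * (g n y' * (npost y y' - n y')) = 0 := by
      intro y'
      have : ∀ y, m y * (g n y' * (npost y y' - n y'))
          = g n y' * (m y * npost y y' - m y * n y') := by intro y; ring
      simp_rw [this, ← Finset.mul_sum, Finset.sum_sub_distrib, hmix,
        ← Finset.sum_mul, hmsum, one_mul, sub_self, mul_zero]
    simp_rw [h2]
    simp
  rw [hsumeq, heq] at hlt
  exact lt_irrefl _ hlt
end

section
/- Posterior-predictive agreement implies the posterior concentrates on a single predictive distribution (identification step of the convergence theorem): if for every y with m y > 0 one has ∑ θ, (w θ * p θ y / m y) * p θ y = m y, then for every θ with w θ > 0 and every y, p θ y = m y. -/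
/-- Posterior-predictive agreement implies the posterior concentrates on a
single predictive distribution. -/
theorem posterior_predictive_agreement_concentrates {Y Θ : Type*} [Fintype Y] [Nonempty Y]
    [Fintype Θ] [Nonempty Θ]
    (w : Θ → ℝ) (hw : IsProbVec w)
    (p : Θ → Y → ℝ) (hp : ∀ θ, IsProbVec (p θ))
    (m : Y → ℝ) (hm : ∀ y, m y = ∑ θ, w θ * p θ y)
    (hagree : ∀ y, m y > 0 → ∑ θ, (w θ * p θ y / m y) * p θ y = m y) :
    ∀ θ, w θ > 0 → ∀ y, p θ y = m y := by
  intro θ hθ y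
  have hnn : ∀ t : Θ, 0 ≤ w t * p t y := fun t => mul_nonneg (hw.1 t) ((hp t).1 y)
  have hmnn : 0 ≤ m y := by
    rw [hm]; exact Finset.sum_nonneg fun t _ => hnn t
  rcases eq_or_lt_of_le hmnn with hzero | hpos
  · -- m y = 0
    have hsum : ∑ t, w t * p t y = 0 := by rw [← hm, ← hzero]
    have := (Finset.sum_eq_zero_iff_of_nonneg (fun t _ => hnn t)).mp hsum θ (Finset.mem_univ θ)
    have hp0 : p θ y = 0 := by
      rcases mul_eq_zero.mp this with h | h
      · exact absurd h (ne_of_gt hθ)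
      · exact h
    rw [hp0, ← hzero]
  · -- m y > 0
    have hne : m y ≠ 0 := ne_of_gt hpos
    have hsq : ∑ t, w t * (p t y) ^ 2 = (m y) ^ 2 := by
      have h := hagree y hpos
      have hrw : ∑ t, (w t * p t y / m y) * p t y = (∑ t, w t * (p t y) ^ 2) / m y := by
        rw [Finset.sum_div]
        exact Finset.sum_congr rfl fun t _ => by ring
      rw [hrw, div_eq_iff hne] at h
      rw [h]; ring
    have hlin : ∑ t, w t * p t y = m y := (hm y).symm
    have hw1 : ∑ t, w t = 1 := hw.2
    have hz : ∑ t, w t * (p t y - m y) ^ 2 = 0 := by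
      have expand : ∀ t ∈ Finset.univ, w t * (p t y - m y) ^ 2 =
          w t * (p t y) ^ 2 - 2 * m y * (w t * p t y) + (m y) ^ 2 * w t :=
        fun t _ => by ring
      rw [Finset.sum_congr rfl expand, Finset.sum_add_distrib, Finset.sum_sub_distrib,
        ← Finset.mul_sum, ← Finset.mul_sum, hsq, hlin, hw1]
      ring
    have hterm := (Finset.sum_eq_zero_iff_of_nonneg
      (fun t _ => mul_nonneg (hw.1 t) (sq_nonneg _))).mp hz θ (Finset.mem_univ θ)
    have : (p θ y - m y) ^ 2 = 0 := by
      rcases mul_eq_zero.mp hterm with h | h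
      · exact absurd h (ne_of_gt hθ)
      · exact h
    have := pow_eq_zero_iff (n := 2) (by norm_num) |>.mp this
    linarith
end

section
/- ΔQ_CoreMSE identity: assume m y > 0 for every y, and let G_MSE p := (∑ y, (p y)^2) - 1. Then the acquisition value under the Brier score equals the expected squared distance between posterior and prior predictive: ∑ y, m y * (∑ y', (n_y y' - n y')^2) = (∑ y, m y * G_MSE (n_y)) - G_MSE n. -/
/-- The Brier score generator. -/
def Gmse {Y : Type*} [Fintype Y] (p : Y → ℝ) : ℝ :=
  (∑ y, (p y) ^ 2) - 1

/-- `ΔQ_CoreMSE` identity: the acquisition value under the Brier score equals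
the expected squared distance between posterior and prior predictive. -/
theorem deltaQ_coreMSE_identity {Y Θ : Type*} [Fintype Y] [Nonempty Y]
    [Fintype Θ] [Nonempty Θ]
    (w : Θ → ℝ) (hw : IsProbVec w)
    (p : Θ → Y → ℝ) (hp : ∀ θ, IsProbVec (p θ))
    (r : Θ → Y → ℝ) (hr : ∀ θ, IsProbVec (r θ))
    (m : Y → ℝ) (hm : ∀ y, m y = ∑ θ, w θ * p θ y)
    (hmpos : ∀ y, m y > 0)
    (n : Y → ℝ) (hn : ∀ y', n y' = ∑ θ, w θ * r θ y')
    (npost : Y → Y → ℝ)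
    (hnpost : ∀ y y', npost y y' = ∑ θ, (w θ * p θ y / m y) * r θ y') :
    ∑ y, m y * (∑ y', (npost y y' - n y') ^ 2) =
      (∑ y, m y * Gmse (npost y)) - Gmse n := by
  obtain ⟨hw0, hw1⟩ := hw
  have hmsum : ∑ y, m y = 1 := by
    simp only [hm]
    rw [Finset.sum_comm, ← hw1]
    exact Finset.sum_congr rfl fun θ _ => by
      rw [← Finset.mul_sum, (hp θ).2, mul_one]
  have key : ∀ y', ∑ y, m y * npost y y' = n y' := by
    intro y'
    simp only [hnpost, Finset.mul_sum]
    have h1 : ∀ y ∈ Finset.univ, ∑ θ, m y * (w θ * p θ y / m y * r θ y')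
        = ∑ θ, w θ * p θ y * r θ y' := by
      intro y _
      refine Finset.sum_congr rfl fun θ _ => ?_
      have hy := (hmpos y).ne'
      field_simp
    rw [Finset.sum_congr rfl h1, Finset.sum_comm, hn]
    refine Finset.sum_congr rfl fun θ _ => ?_
    calc ∑ y, w θ * p θ y * r θ y' = w θ * r θ y' * ∑ y, p θ y := by
          rw [Finset.mul_sum]; exact Finset.sum_congr rfl fun y _ => by ring
      _ = w θ * r θ y' := by rw [(hp θ).2, mul_one]
  have hC : ∑ y, m y * ∑ y', npost y y' * n y' = ∑ y', n y' ^ 2 := by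
    simp only [Finset.mul_sum]
    rw [Finset.sum_comm]
    refine Finset.sum_congr rfl fun y' _ => ?_
    calc ∑ y, m y * (npost y y' * n y') = (∑ y, m y * npost y y') * n y' := by
          rw [Finset.sum_mul]; exact Finset.sum_congr rfl fun y _ => by ring
      _ = n y' ^ 2 := by rw [key y']; ring
  have expand : ∀ y, ∑ y', (npost y y' - n y') ^ 2
      = (∑ y', npost y y' ^ 2) - 2 * (∑ y', npost y y' * n y') + ∑ y', n y' ^ 2 := by
    intro y
    rw [Finset.mul_sum, ← Finset.sum_sub_distrib, ← Finset.sum_add_distrib]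
    exact Finset.sum_congr rfl fun y' _ => by ring
  simp only [Gmse, expand]
  have hdist : ∑ y, m y * ((∑ y', npost y y' ^ 2) - 2 * (∑ y', npost y y' * n y') + ∑ y', n y' ^ 2)
      = (∑ y, m y * ∑ y', npost y y' ^ 2)
        - 2 * (∑ y, m y * ∑ y', npost y y' * n y')
        + (∑ y, m y) * ∑ y', n y' ^ 2 := by
    rw [Finset.mul_sum, Finset.sum_mul, ← Finset.sum_sub_distrib, ← Finset.sum_add_distrib]
    exact Finset.sum_congr rfl fun y _ => by ring
  rw [hdist, hC, hmsum]
  have hdist2 : ∑ y, m y * ((∑ y', npost y y' ^ 2) - 1)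
      = (∑ y, m y * ∑ y', npost y y' ^ 2) - ∑ y, m y := by
    rw [← Finset.sum_sub_distrib]
    exact Finset.sum_congr rfl fun y _ => by ring
  rw [hdist2, hmsum]
  ring
end

section
/- ΔQ_CoreLog identity: assume m y > 0 for every y, n y' > 0 and n_y y' > 0 for all y, y', and let G_log p := ∑ y, p y * Real.log (p y). Then the acquisition value under the logarithmic score equals the expected Kullback–Leibler divergence between posterior and prior predictive: ∑ y, m y * (∑ y', n_y y' * Real.log (n_y y' / n y')) = (∑ y, m y * G_log (n_y)) - G_log n. -/
/-- Negative Shannon entropy, the generator of the logarithmic score. -/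
noncomputable def Glog {Y : Type*} [Fintype Y] (p : Y → ℝ) : ℝ :=
  ∑ y, p y * Real.log (p y)

open Finset Real

theorem mul_log_div_eq_mul_log_sub_mul_log {a b : ℝ} (hb : b ≠ 0) :
    a * log (a / b) = a * log a - a * log b := by
  rcases eq_or_ne a 0 with rfl | ha
  · simp
  · rw [log_div ha hb]
    ring

section Mixture

variable {ι κ : Type*} [Fintype ι] [Fintype κ]

theorem sum_mul_sum_mul_log_eq_Glog (m : ι → ℝ) (q : ι → κ → ℝ) (n : κ → ℝ)
    (hmix : ∀ k, ∑ i, m i * q i k = n k) :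
    ∑ i, m i * ∑ k, q i k * log (n k) = Glog n := by
  calc ∑ i, m i * ∑ k, q i k * log (n k)
      = ∑ k, (∑ i, m i * q i k) * log (n k) := by
        simp_rw [mul_sum, sum_mul, mul_assoc]
        exact sum_comm
    _ = Glog n := by simp_rw [hmix, Glog]

theorem sum_mul_sum_mul_log_div_eq_mul_log_sub_mul_log_Glog (m : ι → ℝ) (q : ι → κ → ℝ) (n : κ → ℝ)
    (hn : ∀ k, n k ≠ 0) (hmix : ∀ k, ∑ i, m i * q i k = n k) :
    ∑ i, m i * ∑ k, q i k * log (q i k / n k) = ∑ i, m i * Glog (q i) - Glog n := by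
  simp_rw [mul_log_div_eq_mul_log_sub_mul_log (hn _), sum_sub_distrib, mul_sub, sum_sub_distrib,
    sum_mul_sum_mul_log_eq_Glog m q n hmix, Glog]

end Mixture

theorem sum_mul_posterior_predictive_eq {Θ Y Z : Type*} [Fintype Θ] [Fintype Y]
    (w : Θ → ℝ) (p : Θ → Y → ℝ) (hp : ∀ θ, ∑ y, p θ y = 1) (r : Θ → Z → ℝ)
    (m : Y → ℝ) (hm : ∀ y, m y ≠ 0) (z : Z) :
    ∑ y, m y * ∑ θ, (w θ * p θ y / m y) * r θ z = ∑ θ, w θ * r θ z := by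
  have hjoint : ∀ y, m y * ∑ θ, (w θ * p θ y / m y) * r θ z = ∑ θ, w θ * r θ z * p θ y := by
    intro y
    rw [mul_sum]
    refine sum_congr rfl fun θ _ => ?_
    field_simp [hm y]
  simp_rw [hjoint, sum_comm (γ := Y), ← mul_sum, hp, mul_one]

theorem deltaQ_coreLog_identity_general {Y Θ : Type*} [Fintype Y]
    [Fintype Θ]
    (w : Θ → ℝ)
    (p : Θ → Y → ℝ) (hp : ∀ θ, IsProbVec (p θ))
    (r : Θ → Y → ℝ)
    (m : Y → ℝ)
    (hmpos : ∀ y, m y > 0)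
    (n : Y → ℝ) (hn : ∀ y', n y' = ∑ θ, w θ * r θ y')
    (hnpos : ∀ y', n y' > 0)
    (npost : Y → Y → ℝ)
    (hnpost : ∀ y y', npost y y' = ∑ θ, (w θ * p θ y / m y) * r θ y') :
    ∑ y, m y * (∑ y', npost y y' * Real.log (npost y y' / n y')) =
      (∑ y, m y * Glog (npost y)) - Glog n := by
  have hmix : ∀ y', ∑ y, m y * npost y y' = n y' := fun y' => by
    simp_rw [hnpost, hn]
    exact sum_mul_posterior_predictive_eq w p (fun θ => (hp θ).2) r m (fun y => (hmpos y).ne') y'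
  exact sum_mul_sum_mul_log_div_eq_mul_log_sub_mul_log_Glog m npost n (fun y' => (hnpos y').ne') hmix

/-- `ΔQ_CoreLog` identity: the acquisition value under the logarithmic score
equals the expected Kullback–Leibler divergence between posterior and prior
predictive. -/
theorem deltaQ_coreLog_identity {Y Θ : Type*} [Fintype Y] [Nonempty Y]
    [Fintype Θ] [Nonempty Θ]
    (w : Θ → ℝ) (hw : IsProbVec w)
    (p : Θ → Y → ℝ) (hp : ∀ θ, IsProbVec (p θ))
    (r : Θ → Y → ℝ) (hr : ∀ θ, IsProbVec (r θ))
    (m : Y → ℝ) (hm : ∀ y, m y = ∑ θ, w θ * p θ y)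
    (hmpos : ∀ y, m y > 0)
    (n : Y → ℝ) (hn : ∀ y', n y' = ∑ θ, w θ * r θ y')
    (hnpos : ∀ y', n y' > 0)
    (npost : Y → Y → ℝ)
    (hnpost : ∀ y y', npost y y' = ∑ θ, (w θ * p θ y / m y) * r θ y')
    (hnpostpos : ∀ y y', npost y y' > 0) :
    ∑ y, m y * (∑ y', npost y y' * Real.log (npost y y' / n y')) =
      (∑ y, m y * Glog (npost y)) - Glog n :=
  deltaQ_coreLog_identity_general w p hp r m hmpos n hn hnpos npost hnpost
end
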